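/- arXiv:1504.07696 — 7 statements merged into one kernel-verified Lean document; each statement's English description precedes it below -/
import Mathlib

section
/- Euler's identity: ζ(2,1) = ζ(3), i.e. the double sum ∑_{n>m≥1} 1/(n²m) equals ∑_{n≥1} 1/n³. -/
/-!
Let `S = ∑_{a,b ≥ 1} 1/(ab(a+b))`, which converges since `a + b ≥ √(ab)`. The partial
fraction `1/(ab(a+b)) = 1/(a(a+b)²) + 1/(b(a+b)²)` and the substitution `n = a + b` give
`S = 2 ζ(2,1)`.
Summing over `b` first instead, `∑_b 1/(b(a+b)) = H_a/a` telescopes, so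
`S = ∑_a H_a/a² = ∑_a H_{a-1}/a² + ∑_a 1/a³ = ζ(2,1) + ζ(3)`.
-/

open Finset Filter Topology

namespace EulerZeta

theorem hasSum_sub_nat_add_of_antitone {f : ℕ → ℝ} (hf : Antitone f)
    (hf0 : Tendsto f atTop (𝓝 0)) (c : ℕ) :
    HasSum (fun n ↦ f n - f (n + c)) (∑ i ∈ range c, f i) := by
  rw [hasSum_iff_tendsto_nat_of_nonneg fun n ↦ sub_nonneg.2 (hf (Nat.le_add_right n c))]
  have partial_sum (N : ℕ) : ∑ n ∈ range N, (f n - f (n + c)) =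
      ∑ i ∈ range c, f i - ∑ i ∈ range c, f (N + i) := by
    have h₁ := sum_range_add f N c
    have h₂ := sum_range_add f c N
    rw [add_comm c N] at h₂
    simp only [sum_sub_distrib, add_comm _ c]
    linarith
  simp only [partial_sum]
  simpa using tendsto_const_nhds.sub
    (tendsto_finsetSum (range c) fun i _ ↦ hf0.comp (tendsto_add_atTop_nat i))

theorem hasSum_one_div_mul_add_harmonic {a : ℕ} (ha : a ≠ 0) :
    HasSum (fun j : ℕ ↦ 1 / (((j : ℝ) + 1) * ((j : ℝ) + 1 + a))) (harmonic a / a) := by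
  have hanti : Antitone fun j : ℕ ↦ 1 / ((j : ℝ) + 1) := fun i j hij ↦
    one_div_le_one_div_of_le (by positivity) (by gcongr)
  have h := (hasSum_sub_nat_add_of_antitone hanti
    tendsto_one_div_add_atTop_nhds_zero_nat a).div_const (a : ℝ)
  have ha' : (a : ℝ) ≠ 0 := Nat.cast_ne_zero.2 ha
  have hH : (harmonic a : ℝ) = ∑ i ∈ range a, 1 / ((i : ℝ) + 1) := by simp [harmonic]
  rw [hH]
  refine h.congr_fun fun j ↦ ?_
  push_cast
  field_simp
  ring

theorem one_div_mul_mul_add_le_rpow {x y : ℝ} (hx : 0 < x) (hy : 0 < y) :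
    1 / (x * y * (x + y)) ≤ 1 / x ^ (3 / 2 : ℝ) * (1 / y ^ (3 / 2 : ℝ)) := by
  have h32 (z : ℝ) (hz : 0 < z) : z ^ (3 / 2 : ℝ) = z * √z := by
    rw [Real.sqrt_eq_rpow, ← Real.rpow_one_add' hz.le (by norm_num)]; norm_num
  rw [h32 x hx, h32 y hy, one_div_mul_one_div]
  apply one_div_le_one_div_of_le (by positivity)
  have hsx := Real.sq_sqrt hx.le
  have hsy := Real.sq_sqrt hy.le
  have : √x * √y ≤ x + y := by
    nlinarith [sq_nonneg (√x - √y), Real.sqrt_nonneg x, Real.sqrt_nonneg y]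
  calc x * √x * (y * √y) = x * y * (√x * √y) := by ring
    _ ≤ x * y * (x + y) := by gcongr

/-- `1 / (a b (a + b))` at `a = i + 1`, `b = j + 1`. -/
noncomputable def eulerKernel (p : ℕ × ℕ) : ℝ :=
  1 / (((p.1 : ℝ) + 1) * ((p.2 : ℝ) + 1) * ((p.1 : ℝ) + 1 + ((p.2 : ℝ) + 1)))

theorem summable_eulerKernel : Summable eulerKernel := by
  have hp : Summable fun n : ℕ ↦ 1 / ((n : ℝ) + 1) ^ (3 / 2 : ℝ) := by
    refine ((Real.summable_one_div_nat_add_rpow 1 (3 / 2)).2 (by norm_num)).congr fun n ↦ ?_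
    rw [abs_of_pos (by positivity)]
  refine (hp.mul_of_nonneg hp (fun _ ↦ by positivity) fun _ ↦ by positivity).of_nonneg_of_le
    (fun _ ↦ by unfold eulerKernel; positivity) fun p ↦ ?_
  exact one_div_mul_mul_add_le_rpow (by positivity) (by positivity)

theorem hasSum_eulerKernel_snd (i : ℕ) :
    HasSum (fun j ↦ eulerKernel (i, j)) (harmonic (i + 1) / ((i : ℝ) + 1) ^ 2) := by
  have h := (hasSum_one_div_mul_add_harmonic i.succ_ne_zero).div_const ((i : ℝ) + 1)
  push_cast at h
  rw [div_div, ← sq] at h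
  refine h.congr_fun fun j ↦ ?_
  simp only [eulerKernel]
  field_simp
  ring

/-- The summand of `ζ(2,1)` at `n = i + j + 2`, `m = j + 1`. -/
noncomputable def doubleZetaTerm (p : ℕ × ℕ) : ℝ :=
  1 / (((p.1 : ℝ) + 1 + ((p.2 : ℝ) + 1)) ^ 2 * ((p.2 : ℝ) + 1))

theorem eulerKernel_eq_add_swap (p : ℕ × ℕ) :
    eulerKernel p = doubleZetaTerm p + doubleZetaTerm p.swap := by
  simp only [eulerKernel, doubleZetaTerm, Prod.fst_swap, Prod.snd_swap]
  field_simp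
  ring

theorem summable_doubleZetaTerm : Summable doubleZetaTerm :=
  summable_eulerKernel.of_nonneg_of_le (fun _ ↦ by unfold doubleZetaTerm; positivity) fun p ↦ by
    rw [eulerKernel_eq_add_swap p, le_add_iff_nonneg_right]
    unfold doubleZetaTerm
    positivity

abbrev DoubleZetaIndex := {p : ℕ × ℕ // p.2 < p.1 ∧ 1 ≤ p.2}

def prodEquivDoubleZetaIndex : ℕ × ℕ ≃ DoubleZetaIndex where
  toFun p := ⟨(p.1 + p.2 + 2, p.2 + 1), by omega, by omega⟩
  invFun q := (q.1.1 - q.1.2 - 1, q.1.2 - 1)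
  left_inv p := by ext <;> dsimp only <;> omega
  right_inv := by rintro ⟨⟨n, m⟩, hmn, hm⟩; ext <;> dsimp only <;> omega

def sigmaFinEquivDoubleZetaIndex : (Σ k : ℕ, Fin k) ≃ DoubleZetaIndex where
  toFun σ := ⟨(σ.1 + 1, σ.2 + 1), by omega, by omega⟩
  invFun q := ⟨q.1.1 - 1, q.1.2 - 1, by omega⟩
  left_inv σ := rfl
  right_inv := by rintro ⟨⟨n, m⟩, hmn, hm⟩; ext <;> dsimp only <;> omega

theorem hasSum_doubleZeta :
    HasSum (fun p : DoubleZetaIndex ↦ (1 : ℝ) / ((p.1.1 : ℝ) ^ 2 * (p.1.2 : ℝ)))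
      (∑' p, doubleZetaTerm p) := by
  rw [← prodEquivDoubleZetaIndex.hasSum_iff]
  refine summable_doubleZetaTerm.hasSum.congr_fun fun p ↦ ?_
  simp only [Function.comp_apply, prodEquivDoubleZetaIndex, Equiv.coe_fn_mk, doubleZetaTerm]
  push_cast
  ring

theorem hasSum_harmonic_succ_div_sq :
    HasSum (fun i : ℕ ↦ (harmonic (i + 1) : ℝ) / ((i : ℝ) + 1) ^ 2)
      (2 * ∑' p, doubleZetaTerm p) := by
  have hA := summable_doubleZetaTerm.hasSum
  have hswap := (Equiv.prodComm ℕ ℕ).hasSum_iff.2 hA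
  have hS : HasSum eulerKernel (2 * ∑' p, doubleZetaTerm p) := by
    rw [two_mul]
    exact (hA.add hswap).congr_fun eulerKernel_eq_add_swap
  exact hS.prod_fiberwise hasSum_eulerKernel_snd

theorem hasSum_harmonic_div_sq {A : ℝ}
    (h : HasSum (fun p : DoubleZetaIndex ↦ (1 : ℝ) / ((p.1.1 : ℝ) ^ 2 * (p.1.2 : ℝ))) A) :
    HasSum (fun k : ℕ ↦ (harmonic k : ℝ) / ((k : ℝ) + 1) ^ 2) A := by
  refine (sigmaFinEquivDoubleZetaIndex.hasSum_iff.2 h).sigma fun k ↦ ?_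
  have hfiber : (harmonic k : ℝ) / ((k : ℝ) + 1) ^ 2 =
      ∑ i : Fin k, 1 / (((k : ℝ) + 1) ^ 2 * ((i : ℝ) + 1)) := by
    rw [Fin.sum_univ_eq_sum_range (fun i ↦ 1 / (((k : ℝ) + 1) ^ 2 * ((i : ℝ) + 1)))]
    simp [harmonic, sum_mul, div_eq_mul_inv]
  rw [hfiber]
  exact (hasSum_fintype _).congr_fun fun i ↦ by simp [sigmaFinEquivDoubleZetaIndex]

theorem harmonic_succ_div_sq (i : ℕ) :
    (harmonic (i + 1) : ℝ) / ((i : ℝ) + 1) ^ 2 =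
      harmonic i / ((i : ℝ) + 1) ^ 2 + 1 / ((i : ℝ) + 1) ^ 3 := by
  push_cast [harmonic_succ]
  field_simp

end EulerZeta

/-- Euler's identity: ζ(2,1) = ζ(3). -/
theorem zeta_two_one_eq_zeta_three :
    (∑' p : {p : ℕ × ℕ // p.2 < p.1 ∧ 1 ≤ p.2},
      (1 : ℝ) / ((p.1.1 : ℝ) ^ 2 * (p.1.2 : ℝ))) =
    ∑' n : ℕ, (1 : ℝ) / ((n : ℝ) + 1) ^ 3 := by
  have hA := EulerZeta.hasSum_doubleZeta
  have hZ : Summable fun n : ℕ ↦ (1 : ℝ) / ((n : ℝ) + 1) ^ 3 :=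
    ((summable_nat_add_iff (f := fun n : ℕ ↦ 1 / (n : ℝ) ^ 3) 1).2
      (Real.summable_one_div_nat_pow.2 (by norm_num))).congr fun n ↦ by push_cast; rfl
  have hS := EulerZeta.hasSum_harmonic_succ_div_sq.unique
    (((EulerZeta.hasSum_harmonic_div_sq hA).add hZ.hasSum).congr_fun EulerZeta.harmonic_succ_div_sq)
  rw [hA.tsum_eq]
  linarith
end

section
/- For every l ≥ 1, the multiple zeta value ζ({2,1}^l) equals ζ({3}^l); that is, ∑_{n_1>m_1>n_2>m_2>⋯>n_l>m_l≥1} 1/(n_1²m_1 n_2²m_2 ⋯ n_l²m_l) = ∑_{n_1>n_2>⋯>n_l≥1} 1/(n_1³n_2³⋯n_l³). -/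
/-!
By Kontsevich's formula, `ζ({3}^l)` and `ζ({2,1}^l)` are the iterated integrals over
`1 > t₁ > ⋯ > 0` of the words `(ω₀ω₀ω₁)^l` and `(ω₀ω₁ω₁)^l`, where `ω₀ = dt/t` and
`ω₁ = dt/(1-t)`. The substitution `t ↦ 1 - t` reverses a word and swaps `ω₀` and `ω₁`,
so it carries the first integral to the second.

Kontsevich's formula is obtained by expanding `∫_{u > t₁ > ⋯} ω_{c₁} ⋯` in powers of `u`:
integrating against `ω₀` divides the `n`-th coefficient by `n`, integrating against `ω₁`
replaces it by the sum of the coefficients below `n`, divided by `n`. Read off for the two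
words, the coefficients are the truncated multiple zeta sums. All of this takes place in
`ℝ≥0∞`, where Tonelli and monotone convergence apply without integrability side conditions.
-/

open scoped BigOperators

/-- ζ({3}^l) = ∑_{n_1 > n_2 > ⋯ > n_l ≥ 1} 1/(n_1³ ⋯ n_l³). -/
noncomputable def zetaThreeRep (l : ℕ) : ℝ :=
  ∑' f : {f : Fin l → ℕ // StrictAnti f ∧ ∀ i, 1 ≤ f i},
    ∏ i : Fin l, (1 : ℝ) / (f.1 i : ℝ) ^ 3

/-- ζ({2,1}^l) = ∑_{n_1 > m_1 > n_2 > m_2 > ⋯ > n_l > m_l ≥ 1} 1/(n_1²m_1 ⋯ n_l²m_l). -/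
noncomputable def zetaTwoOneRep (l : ℕ) : ℝ :=
  ∑' p : {p : (Fin l → ℕ) × (Fin l → ℕ) //
      (∀ i, p.2 i < p.1 i) ∧ (∀ i j, i < j → p.1 j < p.2 i) ∧ ∀ i, 1 ≤ p.2 i},
    ∏ i : Fin l, (1 : ℝ) / ((p.1.1 i : ℝ) ^ 2 * (p.1.2 i : ℝ))

open MeasureTheory Set
open scoped ENNReal

namespace MultipleZeta

theorem lintegral_Ioo_lintegral_Ioo_comm {F : ℝ → ℝ → ℝ≥0∞} (hF : Measurable (Function.uncurry F))
    (a b : ℝ) :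
    ∫⁻ t in Ioo a b, ∫⁻ s in Ioo a t, F s t = ∫⁻ s in Ioo a b, ∫⁻ t in Ioo s b, F s t := by
  -- Both sides are the integral over the square `Ioo a b ×ˢ Ioo a b` of `F s t` cut off at `s < t`.
  set G : ℝ → ℝ → ℝ≥0∞ := fun s t => (Ioi s).indicator (F s) t
  have hG : Measurable (Function.uncurry G) :=
    hF.indicator (measurableSet_lt measurable_fst measurable_snd)
  have hleft : ∀ t ∈ Ioo a b, ∫⁻ s in Ioo a t, F s t = ∫⁻ s in Ioo a b, G s t := by
    intro t ht
    have hG_Iio : ∫⁻ s in Ioo a b, G s t = ∫⁻ s in Ioo a b, (Iio t).indicator (F · t) s := rfl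
    rw [hG_Iio, setLIntegral_indicator measurableSet_Iio, inter_comm, Ioo_inter_Iio,
      min_eq_right ht.2.le]
  have hright : ∀ s ∈ Ioo a b, ∫⁻ t in Ioo s b, F s t = ∫⁻ t in Ioo a b, G s t := by
    intro s hs
    rw [setLIntegral_indicator measurableSet_Ioi, inter_comm, Ioo_inter_Ioi, max_eq_right hs.1.le]
  rw [setLIntegral_congr_fun measurableSet_Ioo hleft,
    setLIntegral_congr_fun measurableSet_Ioo hright]
  exact lintegral_lintegral_swap (f := fun t s => G s t) (hG.comp measurable_swap).aemeasurable

theorem lintegral_Ioo_ofReal_pow {u : ℝ} (hu : 0 < u) (j : ℕ) :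
    ∫⁻ t in Ioo 0 u, ENNReal.ofReal t ^ j
      = ((j + 1 : ℕ) : ℝ≥0∞)⁻¹ * ENNReal.ofReal u ^ (j + 1) := by
  have hint : IntegrableOn (fun t : ℝ => t ^ j) (Ioo 0 u) :=
    (continuous_pow j).integrableOn_Icc.mono_set Ioo_subset_Icc_self
  have hval : ∫ t in Ioo 0 u, t ^ j = u ^ (j + 1) / (j + 1) := by
    rw [← integral_Ioc_eq_integral_Ioo, ← intervalIntegral.integral_of_le hu.le, integral_pow]
    simp
  rw [setLIntegral_congr_fun measurableSet_Ioo fun t ht => (ENNReal.ofReal_pow ht.1.le j).symm,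
    ← ofReal_integral_eq_lintegral_ofReal hint
      (ae_restrict_of_forall_mem measurableSet_Ioo fun t ht => pow_nonneg ht.1.le j),
    hval, ENNReal.ofReal_div_of_pos (by positivity), ENNReal.ofReal_pow hu.le,
    ENNReal.div_eq_inv_mul]
  congr 2
  exact_mod_cast ENNReal.ofReal_natCast (j + 1)

theorem tsum_tsum_add_add_one (f : ℕ → ℕ → ℝ≥0∞) :
    ∑' n, ∑' k, f n (n + k + 1) = ∑' m, ∑ n ∈ Finset.range m, f n m := by
  have hshift : ∀ n, ∑' m, (if n < m then f n m else 0) = ∑' k, f n (n + k + 1) := fun n => by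
    rw [← ENNReal.summable.sum_add_tsum_nat_add' (k := n + 1), Finset.sum_eq_zero, zero_add]
    · exact tsum_congr fun k => by rw [if_pos (by omega), add_comm k, add_right_comm]
    · exact fun m hm => if_neg (by simp at hm; omega)
  simp_rw [← hshift]
  rw [ENNReal.tsum_comm]
  refine tsum_congr fun m => ?_
  rw [tsum_eq_sum (s := Finset.range m) fun n hn => if_neg (by simpa using hn)]
  exact Finset.sum_ite_of_true (fun n hn => Finset.mem_range.1 hn) _ _

theorem tsum_subtype_fin_cons {α : Type*} {n : ℕ} {P : Set (Fin (n + 1) → α)} {Q : Set α}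
    {R : α → Set (Fin n → α)} (hP : ∀ a g, Fin.cons a g ∈ P ↔ a ∈ Q ∧ g ∈ R a)
    (f : (Fin (n + 1) → α) → ℝ≥0∞) :
    ∑' x : P, f x = ∑' (a : Q) (g : R a), f (Fin.cons a g) := by
  have hP' : ∀ x, x ∈ P ↔ x 0 ∈ Q ∧ Fin.tail x ∈ R (x 0) := fun x => by
    rw [← hP, Fin.cons_self_tail]
  let e : (Σ a : Q, R a) ≃ P :=
    { toFun := fun x => ⟨Fin.cons x.1 x.2, (hP _ _).2 ⟨x.1.2, x.2.2⟩⟩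
      invFun := fun x => ⟨⟨x.1 0, ((hP' x).1 x.2).1⟩, ⟨Fin.tail x.1, ((hP' x).1 x.2).2⟩⟩
      left_inv := fun _ => rfl
      right_inv := fun x => Subtype.ext (Fin.cons_self_tail x.1) }
  rw [← e.tsum_eq, ENNReal.tsum_sigma']
  rfl

theorem tsum_setOf_natCast_lt (f : ℕ → ℝ≥0∞) (n : ℕ) :
    ∑' k : {k : ℕ | (k : ℕ∞) < n}, f k = ∑ k ∈ Finset.range n, f k := by
  have hset : {k : ℕ | (k : ℕ∞) < n} = ↑(Finset.range n) := by ext; simp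
  rw [hset]
  exact Finset.tsum_subtype _ f

theorem tsum_setOf_natCast_lt_top (f : ℕ → ℝ≥0∞) : ∑' k : {k : ℕ | (k : ℕ∞) < ⊤}, f k = ∑' k, f k :=
  tsum_subtype_eq_of_support_subset fun k _ => ENat.natCast_lt_top k

theorem tsum_setOf_one_le_and {f : ℕ → ℝ≥0∞} (hf : f 0 = 0) (p : ℕ → Prop) :
    ∑' k : {k : ℕ | 1 ≤ k ∧ p k}, f k = ∑' k : {k | p k}, f k := by
  rw [tsum_subtype, tsum_subtype]
  refine tsum_congr fun k => ?_
  rcases k with _ | k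
  · simp [indicator, hf]
  · by_cases hp : p (k + 1) <;> simp [indicator, hp]

theorem tsum_setOf_lt_and_one_le_and {G : ℕ → ℕ → ℝ≥0∞} (hG : ∀ n, G n 0 = 0) (p : ℕ → Prop) :
    ∑' q : {q : ℕ × ℕ | q.2 < q.1 ∧ 1 ≤ q.2 ∧ p q.1}, G q.1.1 q.1.2
      = ∑' n : {n | p n}, ∑ k ∈ Finset.range n, G n k := by
  rw [tsum_subtype _ fun q : ℕ × ℕ => G q.1 q.2, ENNReal.tsum_prod',
    tsum_subtype _ fun n => ∑ k ∈ Finset.range n, G n k]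
  refine tsum_congr fun n => ?_
  by_cases hn : p n
  · rw [indicator_of_mem (show n ∈ {n | p n} from hn),
      tsum_eq_sum (s := Finset.range n) fun k hk => by simp_all [indicator]]
    refine Finset.sum_congr rfl fun k hk => ?_
    rcases k with _ | k
    · simp [hG]
    · simp_all [indicator, le_add_iff_nonneg_left]
  · simp [indicator, hn]

/-- The letters of a word: `false` is the form `dt / t`, `true` is `dt / (1 - t)`. -/
noncomputable def form : Bool → ℝ → ℝ≥0∞
  | false, t => ENNReal.ofReal t⁻¹
  | true, t => ENNReal.ofReal (1 - t)⁻¹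

/-- `iteratedIntegral [c₁, …, cₖ] a b` is the integral of `form c₁ t₁ ⋯ form cₖ tₖ`
over `b > t₁ > ⋯ > tₖ > a`. -/
noncomputable def iteratedIntegral : List Bool → ℝ → ℝ → ℝ≥0∞
  | [], _, _ => 1
  | c :: w, a, b => ∫⁻ t in Ioo a b, form c t * iteratedIntegral w a t

@[fun_prop]
theorem measurable_form (c : Bool) : Measurable (form c) := by
  cases c
  · exact measurable_inv.ennreal_ofReal
  · exact (measurable_const.sub measurable_id).inv.ennreal_ofReal

theorem measurable_iteratedIntegral (w : List Bool) :
    Measurable fun p : ℝ × ℝ => iteratedIntegral w p.1 p.2 := by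
  induction w with
  | nil => exact measurable_const
  | cons c w ih =>
    have hS : MeasurableSet {q : (ℝ × ℝ) × ℝ | q.2 ∈ Ioo q.1.1 q.1.2} :=
      (measurableSet_lt (by fun_prop) measurable_snd).inter
        (measurableSet_lt measurable_snd (by fun_prop))
    have hF : Measurable fun q : (ℝ × ℝ) × ℝ => form c q.2 * iteratedIntegral w q.1.1 q.2 :=
      ((measurable_form c).comp measurable_snd).mul
        (ih.comp ((measurable_fst.comp measurable_fst).prodMk measurable_snd))
    convert (hF.indicator hS).lintegral_prod_right' (ν := volume) using 2 with p
    rw [iteratedIntegral, ← lintegral_indicator measurableSet_Ioo]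
    rfl

theorem iteratedIntegral_append_singleton (c : Bool) (w : List Bool) (a b : ℝ) :
    iteratedIntegral (w ++ [c]) a b = ∫⁻ s in Ioo a b, form c s * iteratedIntegral w s b := by
  induction w generalizing b with
  | nil => simp [iteratedIntegral]
  | cons c₁ w ih =>
    have hmeas : ∀ t, Measurable fun s => form c s * iteratedIntegral w s t := fun t =>
      (measurable_form c).mul
        ((measurable_iteratedIntegral w).comp (measurable_id.prodMk measurable_const))
    calc iteratedIntegral (c₁ :: (w ++ [c])) a b
        = ∫⁻ t in Ioo a b, ∫⁻ s in Ioo a t, form c₁ t * (form c s * iteratedIntegral w s t) := by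
          refine setLIntegral_congr_fun measurableSet_Ioo fun t _ => ?_
          rw [ih, lintegral_const_mul _ (hmeas t)]
      _ = ∫⁻ s in Ioo a b, ∫⁻ t in Ioo s b, form c₁ t * (form c s * iteratedIntegral w s t) :=
          lintegral_Ioo_lintegral_Ioo_comm
            (F := fun s t => form c₁ t * (form c s * iteratedIntegral w s t))
            (((measurable_form c₁).comp measurable_snd).mul
            (((measurable_form c).comp measurable_fst).mul (measurable_iteratedIntegral w))) a b
      _ = ∫⁻ s in Ioo a b, form c s * iteratedIntegral (c₁ :: w) s b := by
          refine setLIntegral_congr_fun measurableSet_Ioo fun s _ => ?_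
          rw [iteratedIntegral, ← lintegral_const_mul]
          · simp only [mul_left_comm]
          · exact (measurable_form c₁).mul
              ((measurable_iteratedIntegral w).comp (measurable_const.prodMk measurable_id))

/-- The word of the pullback of the forms under `t ↦ 1 - t`. -/
def dualWord (w : List Bool) : List Bool := (w.map not).reverse

theorem form_one_sub (c : Bool) (t : ℝ) : form c (1 - t) = form (!c) t := by
  cases c <;> simp [form]

theorem iteratedIntegral_dualWord (w : List Bool) (a b : ℝ) :
    iteratedIntegral (dualWord w) (1 - b) (1 - a) = iteratedIntegral w a b := by
  induction w generalizing b with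
  | nil => rfl
  | cons c w ih =>
    have hreflect := (Measure.measurePreserving_sub_left volume (1 : ℝ)).setLIntegral_comp_emb
      (MeasurableEquiv.subLeft (1 : ℝ)).measurableEmbedding
      (fun t => form c t * iteratedIntegral w a t) (Ioo (1 - b) (1 - a))
    rw [image_const_sub_Ioo, sub_sub_cancel, sub_sub_cancel] at hreflect
    rw [dualWord, List.map_cons, List.reverse_cons, iteratedIntegral_append_singleton,
      iteratedIntegral, ← hreflect]
    refine setLIntegral_congr_fun measurableSet_Ioo fun s _ => ?_
    rw [form_one_sub, ← ih, sub_sub_cancel]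
    rfl

/-- The coefficients of `u ↦ iteratedIntegral w 0 u` as a power series in `u`. -/
noncomputable def coeff : List Bool → ℕ → ℝ≥0∞
  | [], n => if n = 0 then 1 else 0
  | false :: w, n => (n : ℝ≥0∞)⁻¹ * coeff w n
  | true :: w, n => (n : ℝ≥0∞)⁻¹ * ∑ k ∈ Finset.range n, coeff w k

theorem coeff_zero_eq_zero {w : List Bool} (hw : w ≠ []) (hlast : w.getLast? ≠ some false) :
    coeff w 0 = 0 := by
  induction w with
  | nil => exact absurd rfl hw
  | cons c w ih =>
    cases c with
    | true => simp [coeff]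
    | false =>
      cases w with
      | nil => simp at hlast
      | cons c w => simp [coeff, ih (List.cons_ne_nil c w) (by simpa using hlast)]

theorem lintegral_form_false_mul_tsum {u : ℝ} (hu : 0 < u) {a : ℕ → ℝ≥0∞} (ha : a 0 = 0) :
    ∫⁻ t in Ioo 0 u, form false t * ∑' n, a n * ENNReal.ofReal t ^ n
      = ∑' n : ℕ, (n : ℝ≥0∞)⁻¹ * a n * ENNReal.ofReal u ^ n := by
  have hterm : ∀ n : ℕ, ∫⁻ t in Ioo 0 u, a n * (form false t * ENNReal.ofReal t ^ n)
      = (n : ℝ≥0∞)⁻¹ * a n * ENNReal.ofReal u ^ n := by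
    rintro (_ | j)
    · simp [ha]
    · have hpow : ∀ t ∈ Ioo 0 u, form false t * ENNReal.ofReal t ^ (j + 1) = ENNReal.ofReal t ^ j :=
        fun t ht => by
          rw [form, ENNReal.ofReal_inv_of_pos ht.1, pow_succ', ← mul_assoc,
            ENNReal.inv_mul_cancel (by simpa using ht.1) ENNReal.ofReal_ne_top, one_mul]
      rw [lintegral_const_mul _ (by fun_prop), setLIntegral_congr_fun measurableSet_Ioo hpow,
        lintegral_Ioo_ofReal_pow hu]
      ring
  simp_rw [← ENNReal.tsum_mul_left, mul_left_comm (form false _)]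
  rw [lintegral_tsum fun n => by fun_prop]
  exact tsum_congr hterm

theorem lintegral_form_true_mul_tsum {u : ℝ} (hu₀ : 0 < u) (hu₁ : u ≤ 1) (a : ℕ → ℝ≥0∞) :
    ∫⁻ t in Ioo 0 u, form true t * ∑' n, a n * ENNReal.ofReal t ^ n
      = ∑' m : ℕ, (m : ℝ≥0∞)⁻¹ * (∑ n ∈ Finset.range m, a n) * ENNReal.ofReal u ^ m := by
  have hgeom : ∀ t ∈ Ioo 0 u, form true t * ∑' n, a n * ENNReal.ofReal t ^ n
      = ∑' (n) (k), a n * ENNReal.ofReal t ^ (n + k) := fun t ht => by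
    have hform : form true t = ∑' k, ENNReal.ofReal t ^ k := by
      rw [ENNReal.tsum_geometric, form, ENNReal.ofReal_inv_of_pos (by linarith [ht.2]),
        ENNReal.ofReal_sub 1 ht.1.le, ENNReal.ofReal_one]
    rw [hform, ← ENNReal.tsum_mul_left]
    refine tsum_congr fun n => ?_
    rw [← ENNReal.tsum_mul_right]
    exact tsum_congr fun k => by ring
  rw [setLIntegral_congr_fun measurableSet_Ioo hgeom,
    lintegral_tsum fun n => (Measurable.tsum fun k => by fun_prop).aemeasurable]
  have hterm : ∀ n k : ℕ, ∫⁻ t in Ioo 0 u, a n * ENNReal.ofReal t ^ (n + k)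
      = a n * (((n + k + 1 : ℕ) : ℝ≥0∞)⁻¹ * ENNReal.ofReal u ^ (n + k + 1)) := fun n k => by
    rw [lintegral_const_mul _ (by fun_prop), lintegral_Ioo_ofReal_pow hu₀]
  calc ∑' n, ∫⁻ t in Ioo 0 u, ∑' k, a n * ENNReal.ofReal t ^ (n + k)
      = ∑' n, ∑' k, a n * (((n + k + 1 : ℕ) : ℝ≥0∞)⁻¹ * ENNReal.ofReal u ^ (n + k + 1)) := by
        refine tsum_congr fun n => ?_
        rw [lintegral_tsum fun k => by fun_prop]
        exact tsum_congr (hterm n)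
    _ = _ := by
        rw [tsum_tsum_add_add_one fun n m => a n * ((m : ℝ≥0∞)⁻¹ * ENNReal.ofReal u ^ m)]
        refine tsum_congr fun m => ?_
        rw [← Finset.sum_mul]
        ring

theorem iteratedIntegral_zero_eq_tsum_coeff {w : List Bool} (hw : w.getLast? ≠ some false)
    {u : ℝ} (hu : u ∈ Ioc 0 1) :
    iteratedIntegral w 0 u = ∑' n, coeff w n * ENNReal.ofReal u ^ n := by
  induction w generalizing u with
  | nil =>
    rw [tsum_eq_single 0 fun n hn => by simp [coeff, hn]]
    simp [iteratedIntegral, coeff]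
  | cons c w ih =>
    have hw' : w.getLast? ≠ some false := by
      cases w with
      | nil => simp
      | cons => simpa using hw
    rw [iteratedIntegral, setLIntegral_congr_fun measurableSet_Ioo fun t ht =>
      congrArg (form c t * ·) (ih hw' ⟨ht.1, ht.2.le.trans hu.2⟩)]
    cases c with
    | false =>
      have hne : w ≠ [] := by rintro rfl; simp at hw
      rw [lintegral_form_false_mul_tsum hu.1 (coeff_zero_eq_zero hne hw')]
      rfl
    | true =>
      rw [lintegral_form_true_mul_tsum hu.1 hu.2]
      rfl

theorem iteratedIntegral_zero_one_eq_tsum_coeff {w : List Bool} (hw : w.getLast? ≠ some false) :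
    iteratedIntegral w 0 1 = ∑' n, coeff w n := by
  simp [iteratedIntegral_zero_eq_tsum_coeff hw (right_mem_Ioc.2 one_pos)]

def wordThree (l : ℕ) : List Bool := (List.replicate l [false, false, true]).flatten

def wordTwoOne (l : ℕ) : List Bool := (List.replicate l [false, true, true]).flatten

theorem dualWord_wordThree (l : ℕ) : dualWord (wordThree l) = wordTwoOne l := by
  simp [dualWord, wordThree, wordTwoOne, List.map_flatten, List.reverse_flatten]

theorem getLast?_wordThree_ne (l : ℕ) : (wordThree l).getLast? ≠ some false := by
  cases l <;> simp [wordThree, List.getLast?_flatten, List.replicate_succ']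

theorem getLast?_wordTwoOne_ne (l : ℕ) : (wordTwoOne l).getLast? ≠ some false := by
  cases l <;> simp [wordTwoOne, List.getLast?_flatten, List.replicate_succ']

theorem coeff_wordThree_succ (l n : ℕ) :
    coeff (wordThree (l + 1)) n
      = (n : ℝ≥0∞)⁻¹ ^ 3 * ∑ k ∈ Finset.range n, coeff (wordThree l) k := by
  simp only [wordThree, List.replicate_succ, List.flatten_cons, List.cons_append, List.nil_append,
    coeff]
  ring

theorem coeff_wordTwoOne_succ (l n : ℕ) :
    coeff (wordTwoOne (l + 1)) n = ∑ k ∈ Finset.range n,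
      (n : ℝ≥0∞)⁻¹ ^ 2 * (k : ℝ≥0∞)⁻¹ * ∑ j ∈ Finset.range k, coeff (wordTwoOne l) j := by
  simp only [wordTwoOne, List.replicate_succ, List.flatten_cons, List.cons_append,
    List.nil_append, coeff]
  rw [Finset.mul_sum, Finset.mul_sum]
  exact Finset.sum_congr rfl fun k _ => by ring

/-- Indices of `ζ({3}^l)` truncated to `n₁ < m`; `m = ⊤` is the full index set. -/
def zetaThreeIndex (l : ℕ) (m : ℕ∞) : Set (Fin l → ℕ) :=
  {f | StrictAnti f ∧ (∀ i, 1 ≤ f i) ∧ ∀ i, (f i : ℕ∞) < m}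

def zetaTwoOneIndex (l : ℕ) (m : ℕ∞) : Set (Fin l → ℕ × ℕ) :=
  {p | (∀ i, (p i).2 < (p i).1) ∧ (∀ i j, i < j → (p j).1 < (p i).2) ∧ (∀ i, 1 ≤ (p i).2) ∧
    ∀ i, ((p i).1 : ℕ∞) < m}

theorem cons_mem_zetaThreeIndex_iff {l : ℕ} {m : ℕ∞} {k : ℕ} {g : Fin l → ℕ} :
    Fin.cons k g ∈ zetaThreeIndex (l + 1) m ↔ (1 ≤ k ∧ (k : ℕ∞) < m) ∧ g ∈ zetaThreeIndex l k := by
  simp only [zetaThreeIndex, StrictAnti, mem_ofPred_eq, Fin.forall_fin_succ, Fin.cons_zero,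
    Fin.cons_succ, Fin.succ_lt_succ_iff, Fin.succ_pos, Fin.not_lt_zero, IsEmpty.forall_iff,
    forall_const, true_and, Nat.cast_lt]
  exact ⟨fun ⟨⟨hgk, hg⟩, ⟨hk, hg1⟩, hkm, _⟩ => ⟨⟨hk, hkm⟩, hg, hg1, hgk⟩,
    fun ⟨⟨hk, hkm⟩, hg, hg1, hgk⟩ =>
      ⟨⟨hgk, hg⟩, ⟨hk, hg1⟩, hkm, fun i => (Nat.cast_lt.2 (hgk i)).trans hkm⟩⟩

theorem cons_mem_zetaTwoOneIndex_iff {l : ℕ} {m : ℕ∞} {q : ℕ × ℕ} {g : Fin l → ℕ × ℕ} :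
    Fin.cons q g ∈ zetaTwoOneIndex (l + 1) m ↔
      (q.2 < q.1 ∧ 1 ≤ q.2 ∧ (q.1 : ℕ∞) < m) ∧ g ∈ zetaTwoOneIndex l q.2 := by
  simp only [zetaTwoOneIndex, mem_ofPred_eq, Fin.forall_fin_succ, Fin.cons_zero,
    Fin.cons_succ, Fin.succ_lt_succ_iff, Fin.succ_pos, Fin.not_lt_zero, IsEmpty.forall_iff,
    forall_const, true_and, Nat.cast_lt]
  exact ⟨fun ⟨⟨hq, hg⟩, ⟨hgq, hgg⟩, ⟨hq1, hg1⟩, hqm, _⟩ => ⟨⟨hq, hq1, hqm⟩, hg, hgg, hg1, hgq⟩,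
    fun ⟨⟨hq, hq1, hqm⟩, hg, hgg, hg1, hgq⟩ => ⟨⟨hq, hg⟩, ⟨hgq, hgg⟩, ⟨hq1, hg1⟩, hqm,
      fun i => ((Nat.cast_lt.2 ((hgq i).trans hq)).trans hqm)⟩⟩

noncomputable def zetaThreeTrunc (l : ℕ) (m : ℕ∞) : ℝ≥0∞ :=
  ∑' f : zetaThreeIndex l m, ∏ i, (f.1 i : ℝ≥0∞)⁻¹ ^ 3

noncomputable def zetaTwoOneTrunc (l : ℕ) (m : ℕ∞) : ℝ≥0∞ :=
  ∑' p : zetaTwoOneIndex l m, ∏ i, ((p.1 i).1 : ℝ≥0∞)⁻¹ ^ 2 * ((p.1 i).2 : ℝ≥0∞)⁻¹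

theorem zetaThreeTrunc_zero (m : ℕ∞) : zetaThreeTrunc 0 m = 1 := by
  rw [zetaThreeTrunc, tsum_eq_single ⟨finZeroElim, by simp [zetaThreeIndex, StrictAnti]⟩
    fun f hf => absurd (Subtype.ext (funext finZeroElim)) hf]
  simp

theorem zetaTwoOneTrunc_zero (m : ℕ∞) : zetaTwoOneTrunc 0 m = 1 := by
  rw [zetaTwoOneTrunc, tsum_eq_single ⟨finZeroElim, by simp [zetaTwoOneIndex]⟩
    fun f hf => absurd (Subtype.ext (funext finZeroElim)) hf]
  simp

theorem zetaThreeTrunc_succ (l : ℕ) (m : ℕ∞) :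
    zetaThreeTrunc (l + 1) m =
      ∑' k : {k : ℕ | 1 ≤ k ∧ (k : ℕ∞) < m}, (k : ℝ≥0∞)⁻¹ ^ 3 * zetaThreeTrunc l k := by
  rw [zetaThreeTrunc, tsum_subtype_fin_cons (fun _ _ => cons_mem_zetaThreeIndex_iff)
    fun f => ∏ i, (f i : ℝ≥0∞)⁻¹ ^ 3]
  refine tsum_congr fun k => ?_
  rw [zetaThreeTrunc, ← ENNReal.tsum_mul_left]
  simp [Fin.prod_univ_succ]

theorem zetaTwoOneTrunc_succ (l : ℕ) (m : ℕ∞) :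
    zetaTwoOneTrunc (l + 1) m =
      ∑' q : {q : ℕ × ℕ | q.2 < q.1 ∧ 1 ≤ q.2 ∧ (q.1 : ℕ∞) < m},
        (q.1.1 : ℝ≥0∞)⁻¹ ^ 2 * (q.1.2 : ℝ≥0∞)⁻¹ * zetaTwoOneTrunc l q.1.2 := by
  rw [zetaTwoOneTrunc, tsum_subtype_fin_cons (fun _ _ => cons_mem_zetaTwoOneIndex_iff)
    fun p => ∏ i, ((p i).1 : ℝ≥0∞)⁻¹ ^ 2 * ((p i).2 : ℝ≥0∞)⁻¹]
  refine tsum_congr fun q => ?_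
  rw [zetaTwoOneTrunc, ← ENNReal.tsum_mul_left]
  simp [Fin.prod_univ_succ]

theorem zetaThreeTrunc_eq_tsum_coeff (l : ℕ) {m : ℕ∞} (hm : 0 < m) :
    zetaThreeTrunc l m = ∑' n : {n : ℕ | (n : ℕ∞) < m}, coeff (wordThree l) n := by
  induction l generalizing m with
  | zero =>
    rw [zetaThreeTrunc_zero, tsum_eq_single ⟨0, by simpa using hm⟩ fun n hn => ?_]
    · simp [wordThree, coeff]
    · simpa [wordThree, coeff, Subtype.ext_iff] using hn
  | succ l ih =>
    rw [zetaThreeTrunc_succ, ← tsum_setOf_one_le_and (by simp [coeff_wordThree_succ])]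
    refine tsum_congr fun n => ?_
    rw [ih (Nat.cast_pos.2 n.2.1), tsum_setOf_natCast_lt, coeff_wordThree_succ]

theorem zetaTwoOneTrunc_eq_tsum_coeff (l : ℕ) {m : ℕ∞} (hm : 0 < m) :
    zetaTwoOneTrunc l m = ∑' n : {n : ℕ | (n : ℕ∞) < m}, coeff (wordTwoOne l) n := by
  induction l generalizing m with
  | zero =>
    rw [zetaTwoOneTrunc_zero, tsum_eq_single ⟨0, by simpa using hm⟩ fun n hn => ?_]
    · simp [wordTwoOne, coeff]
    · simpa [wordTwoOne, coeff, Subtype.ext_iff] using hn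
  | succ l ih =>
    simp_rw [zetaTwoOneTrunc_succ, coeff_wordTwoOne_succ]
    rw [← tsum_setOf_lt_and_one_le_and (G := fun n k => (n : ℝ≥0∞)⁻¹ ^ 2 * (k : ℝ≥0∞)⁻¹ *
      ∑ j ∈ Finset.range k, coeff (wordTwoOne l) j) (by simp) fun n : ℕ => (n : ℕ∞) < m]
    refine tsum_congr fun q => ?_
    rw [ih (Nat.cast_pos.2 q.2.2.1), tsum_setOf_natCast_lt]

theorem zetaThreeRep_eq_toReal (l : ℕ) : zetaThreeRep l = (zetaThreeTrunc l ⊤).toReal := by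
  have hindex : ∀ f : Fin l → ℕ, (StrictAnti f ∧ ∀ i, 1 ≤ f i) ↔ f ∈ zetaThreeIndex l ⊤ :=
    fun f => by simp [zetaThreeIndex]
  have hfinite : ∀ f : zetaThreeIndex l ⊤, ∏ i, (f.1 i : ℝ≥0∞)⁻¹ ^ 3 ≠ ⊤ := fun f =>
    ENNReal.prod_ne_top fun i _ => by simpa [Nat.one_le_iff_ne_zero] using f.2.2.1 i
  rw [zetaThreeTrunc, ENNReal.tsum_toReal_eq hfinite, zetaThreeRep,
    ← (Equiv.subtypeEquivRight hindex).tsum_eq]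
  refine tsum_congr fun f => ?_
  simp [ENNReal.toReal_prod]

theorem zetaTwoOneRep_eq_toReal (l : ℕ) : zetaTwoOneRep l = (zetaTwoOneTrunc l ⊤).toReal := by
  let e := (Equiv.arrowProdEquivProdArrow (Fin l) (fun _ => ℕ) (fun _ => ℕ)).subtypeEquiv
    (p := (· ∈ zetaTwoOneIndex l ⊤))
    (q := fun p => (∀ i, p.2 i < p.1 i) ∧ (∀ i j, i < j → p.1 j < p.2 i) ∧ ∀ i, 1 ≤ p.2 i)
    fun p => by simp [zetaTwoOneIndex, Equiv.arrowProdEquivProdArrow]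
  have hfinite : ∀ p : zetaTwoOneIndex l ⊤,
      ∏ i, ((p.1 i).1 : ℝ≥0∞)⁻¹ ^ 2 * ((p.1 i).2 : ℝ≥0∞)⁻¹ ≠ ⊤ := fun p =>
    ENNReal.prod_ne_top fun i _ => by
      have h₂ := p.2.2.2.1 i
      have h₁ := h₂.trans (p.2.1 i).le
      simp [ENNReal.mul_eq_top, Nat.one_le_iff_ne_zero.1 h₁, Nat.one_le_iff_ne_zero.1 h₂]
  rw [zetaTwoOneTrunc, ENNReal.tsum_toReal_eq hfinite, zetaTwoOneRep, ← e.tsum_eq]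
  refine tsum_congr fun p => ?_
  simp [e, Equiv.arrowProdEquivProdArrow, ENNReal.toReal_prod, mul_comm]

end MultipleZeta

open MultipleZeta

theorem zetaTwoOneRep_eq_zetaThreeRep_general (l : ℕ) :
    zetaTwoOneRep l = zetaThreeRep l := by
  have hduality : iteratedIntegral (wordTwoOne l) 0 1 = iteratedIntegral (wordThree l) 0 1 := by
    simpa [dualWord_wordThree] using iteratedIntegral_dualWord (wordThree l) 0 1
  rw [zetaTwoOneRep_eq_toReal, zetaThreeRep_eq_toReal,
    zetaTwoOneTrunc_eq_tsum_coeff l ENat.top_pos, zetaThreeTrunc_eq_tsum_coeff l ENat.top_pos,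
    tsum_setOf_natCast_lt_top, tsum_setOf_natCast_lt_top,
    ← iteratedIntegral_zero_one_eq_tsum_coeff (getLast?_wordThree_ne l),
    ← iteratedIntegral_zero_one_eq_tsum_coeff (getLast?_wordTwoOne_ne l), hduality]

theorem zetaTwoOneRep_eq_zetaThreeRep (l : ℕ) (hl : 1 ≤ l) :
    zetaTwoOneRep l = zetaThreeRep l :=
  zetaTwoOneRep_eq_zetaThreeRep_general l
end

section
/- Define B_n(t) = (1/n!) ∑_{k=0}^n (ωt)_k (ω²t)_k (t)_{n−k} (−t+k)_{n−k} / (k! (n−k)!), where ω = e^{2πi/3}. Then B_0 = 1, B_1 = 0, and for all n ≥ 0: n³ B_n − (n+1)²(2n+1) B_{n+1} + (n+2)²(n+1) B_{n+2} = t³ B_n. -/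
/-!
Since ω² + ω + 1 = 0, the product (ωt)_k (ω²t)_k is ∏_{i<k} (i² - i t + t²), so every summand
F(n, k) of n! B_n is an explicit hypergeometric term. The recurrence is found by creative
telescoping: applying the recurrence operator to F(n, k) gives G(n, k + 1) - G(n, k) for the
certificate G = `wzCert`, which vanishes at k = 0. Summing over k < n telescopes to G(n, n), and
the terms with k ≥ n left over from the longer sums for n! B_{n+1} and n! B_{n+2} add up to -G(n, n).
-/

open scoped BigOperators

/-- The Pochhammer symbol (rising factorial) (a)_n. -/
noncomputable def poch (a : ℂ) (n : ℕ) : ℂ := (ascPochhammer ℂ n).eval a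

/-- ω = e^{2πi/3}. -/
noncomputable def ω : ℂ := Complex.exp (2 * Real.pi * Complex.I / 3)

/-- The polynomials B_n(t). -/
noncomputable def B (t : ℂ) (n : ℕ) : ℂ :=
  (1 / (Nat.factorial n : ℂ)) * ∑ k ∈ Finset.range (n + 1),
    poch (ω * t) k * poch (ω ^ 2 * t) k * poch t (n - k) * poch (-t + k) (n - k)
      / ((Nat.factorial k : ℂ) * (Nat.factorial (n - k) : ℂ))

open Finset Nat

lemma poch_zero (a : ℂ) : poch a 0 = 1 := by simp [poch]

lemma poch_succ (a : ℂ) (m : ℕ) : poch a (m + 1) = poch a m * (a + m) :=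
  ascPochhammer_succ_eval m a

lemma poch_succ_left (a : ℂ) (m : ℕ) : poch a (m + 1) = a * poch (a + 1) m := by
  simp [poch, ascPochhammer_succ_left, Polynomial.eval_comp]

lemma isPrimitiveRoot_ω : IsPrimitiveRoot ω 3 := by
  simpa [ω] using Complex.isPrimitiveRoot_exp 3 (by norm_num)

lemma ω_sq_add_ω_add_one : ω ^ 2 + ω + 1 = 0 := by
  simpa [Finset.sum_range_succ, add_comm, add_left_comm, add_assoc] using
    isPrimitiveRoot_ω.geom_sum_eq_zero (by norm_num)

noncomputable def pochOmega (t : ℂ) (k : ℕ) : ℂ := poch (ω * t) k * poch (ω ^ 2 * t) k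

lemma pochOmega_zero (t : ℂ) : pochOmega t 0 = 1 := by simp [pochOmega, poch_zero]

lemma pochOmega_succ (t : ℂ) (k : ℕ) :
    pochOmega t (k + 1) = pochOmega t k * ((k : ℂ) ^ 2 - k * t + t ^ 2) := by
  have h3 : ω ^ 3 = 1 := isPrimitiveRoot_ω.pow_eq_one
  unfold pochOmega
  rw [poch_succ, poch_succ]
  linear_combination poch (ω * t) k * poch (ω ^ 2 * t) k * (t ^ 2 * h3 + k * t * ω_sq_add_ω_add_one)

noncomputable def summand (t : ℂ) (k j : ℕ) : ℂ :=
  pochOmega t k * poch t j * poch (-t + k) j / (k ! * j !)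

-- The factor `k` stands for k! / (k - 1)! and makes the certificate vanish at k = 0.
noncomputable def wzCert (t : ℂ) (n k : ℕ) : ℂ :=
  k * (t - n) * (1 - t) * (k - t - n) * (k - t - 1) * pochOmega t k
    * poch t (n - k) * poch (-t + k) (n - k) / (k ! * (n + 2 - k) !)

lemma summand_telescope (t : ℂ) {n k : ℕ} (hk : k < n) :
    ((n : ℂ) ^ 3 - t ^ 3) * summand t k (n - k)
      - ((n : ℂ) + 1) * (2 * n + 1) * summand t k (n + 1 - k)
      + ((n : ℂ) + 2) * summand t k (n + 2 - k)
      = wzCert t n (k + 1) - wzCert t n k := by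
  obtain ⟨m, rfl⟩ : ∃ m, n = k + m + 1 := ⟨n - k - 1, by omega⟩
  unfold summand wzCert
  rw [show k + m + 1 - k = m + 1 by omega, show k + m + 1 + 1 - k = m + 2 by omega,
    show k + m + 1 + 2 - k = m + 3 by omega, show k + m + 1 - (k + 1) = m by omega,
    show k + m + 1 + 2 - (k + 1) = m + 2 by omega]
  -- write every Pochhammer symbol through `poch t m` and `poch (-t + k + 1) m`
  simp only [poch_succ_left (-t + k), pochOmega_succ]
  simp only [poch_succ]
  rw [show (-t + ((k + 1 : ℕ) : ℂ)) = -t + k + 1 by push_cast; ring]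
  rw [factorial_succ k, show m + 3 = m + 2 + 1 from rfl, factorial_succ (m + 2),
    factorial_succ (m + 1), factorial_succ m]
  push_cast
  have hk! : (k ! : ℂ) ≠ 0 := by exact_mod_cast factorial_ne_zero k
  have hm! : (m ! : ℂ) ≠ 0 := by exact_mod_cast factorial_ne_zero m
  have hm1 : (m : ℂ) + 1 ≠ 0 := by norm_cast
  have hm2 : (m : ℂ) + 1 + 1 ≠ 0 := by norm_cast
  have hm3 : (m : ℂ) + 2 + 1 ≠ 0 := by norm_cast
  have hk1 : (k : ℂ) + 1 ≠ 0 := by norm_cast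
  field_simp
  ring

lemma wzCert_zero (t : ℂ) (n : ℕ) : wzCert t n 0 = 0 := by simp [wzCert]

lemma summand_boundary (t : ℂ) (n : ℕ) :
    ((n : ℂ) ^ 3 - t ^ 3) * summand t n 0
      - ((n : ℂ) + 1) * (2 * n + 1) * (summand t n 1 + summand t (n + 1) 0)
      + ((n : ℂ) + 2) * (summand t n 2 + summand t (n + 1) 1 + summand t (n + 2) 0)
      = -wzCert t n n := by
  unfold summand wzCert
  rw [Nat.sub_self, Nat.add_sub_cancel_left]
  simp only [pochOmega_succ, poch_succ, poch_zero, factorial_succ, factorial_zero]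
  push_cast
  have hn! : (n ! : ℂ) ≠ 0 := by exact_mod_cast factorial_ne_zero n
  have hn1 : (n : ℂ) + 1 ≠ 0 := by norm_cast
  have hn2 : (n : ℂ) + 1 + 1 ≠ 0 := by norm_cast
  field_simp
  ring

noncomputable def bSum (t : ℂ) (n : ℕ) : ℂ := ∑ k ∈ range (n + 1), summand t k (n - k)

lemma bSum_recurrence (t : ℂ) (n : ℕ) :
    ((n : ℂ) ^ 3 - t ^ 3) * bSum t n - ((n : ℂ) + 1) * (2 * n + 1) * bSum t (n + 1)
      + ((n : ℂ) + 2) * bSum t (n + 2) = 0 := by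
  have htel : ((n : ℂ) ^ 3 - t ^ 3) * ∑ k ∈ range n, summand t k (n - k)
      - ((n : ℂ) + 1) * (2 * n + 1) * ∑ k ∈ range n, summand t k (n + 1 - k)
      + ((n : ℂ) + 2) * ∑ k ∈ range n, summand t k (n + 2 - k) = wzCert t n n := by
    rw [mul_sum, mul_sum, mul_sum, ← sum_sub_distrib, ← sum_add_distrib,
      sum_congr rfl fun k hk => summand_telescope t (mem_range.1 hk), sum_range_sub,
      wzCert_zero, sub_zero]
  simp only [bSum, sum_range_succ, Nat.sub_self, Nat.add_sub_cancel_left,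
    show n + 2 - (n + 1) = 1 by omega]
  linear_combination htel + summand_boundary t n

lemma bSum_eq_factorial_mul_B (t : ℂ) (n : ℕ) : bSum t n = n ! * B t n := by
  have hn! : (n ! : ℂ) ≠ 0 := by exact_mod_cast factorial_ne_zero n
  rw [show B t n = 1 / n ! * bSum t n from rfl]
  field_simp

theorem B_recurrence (t : ℂ) :
    B t 0 = 1 ∧ B t 1 = 0 ∧
    ∀ n : ℕ, (n : ℂ) ^ 3 * B t n - ((n : ℂ) + 1) ^ 2 * (2 * n + 1) * B t (n + 1)
        + ((n : ℂ) + 2) ^ 2 * ((n : ℂ) + 1) * B t (n + 2) = t ^ 3 * B t n := by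
  refine ⟨?_, ?_, fun n => ?_⟩
  · simpa [bSum, summand, pochOmega_zero, poch_zero] using (bSum_eq_factorial_mul_B t 0).symm
  · simpa [bSum, summand, sum_range_succ, pochOmega_succ, pochOmega_zero, poch_succ, poch_zero,
      pow_two] using (bSum_eq_factorial_mul_B t 1).symm
  · have h := bSum_recurrence t n
    simp only [bSum_eq_factorial_mul_B, factorial_succ] at h
    push_cast at h
    have hn! : (n ! : ℂ) ≠ 0 := by exact_mod_cast factorial_ne_zero n
    refine mul_left_cancel₀ hn! ?_
    linear_combination h
end

section
/- For every n ≥ 0, the polynomial B_n defined by B_0 = 1, B_1 = 0 and the recursion (n+2)²(n+1) B_{n+2} = (n+1)²(2n+1) B_{n+1} − (n³ − t³) B_n is a polynomial in t³ with rational coefficients divisible by t³ for n ≥ 1; that is, B_n(t) ∈ t³ℚ[t³] for n ≥ 1. -/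
open Polynomial

private lemma aux_cancel (c : ℚ) (hc : c ≠ 0) (b A : ℚ[X])
    (h : C c * A = X ^ 3 * b.comp (X ^ 3)) :
    ∃ r : ℚ[X], A = X ^ 3 * r.comp (X ^ 3) := by
  refine ⟨C c⁻¹ * b, ?_⟩
  have hC : (C c : ℚ[X]) ≠ 0 := by simpa using hc
  apply mul_left_cancel₀ hC
  rw [h, mul_comp, C_comp]
  rw [show C c * (X ^ 3 * (C c⁻¹ * b.comp (X ^ 3)))
      = C c * C c⁻¹ * (X ^ 3 * b.comp (X ^ 3)) from by ring,
    ← C_mul, mul_inv_cancel₀ hc, C_1, one_mul]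

theorem B_mem_tcube_Q_tcube (B : ℕ → Polynomial ℚ)
    (h0 : B 0 = 1) (h1 : B 1 = 0)
    (hrec : ∀ n : ℕ,
      ((n : ℚ[X]) + 2) ^ 2 * ((n : ℚ[X]) + 1) * B (n + 2)
        = ((n : ℚ[X]) + 1) ^ 2 * (2 * (n : ℚ[X]) + 1) * B (n + 1)
          - ((n : ℚ[X]) ^ 3 - X ^ 3) * B n) :
    ∀ n : ℕ, 1 ≤ n → ∃ p : ℚ[X], B n = X ^ 3 * p.comp (X ^ 3) := by
  have key : ∀ n : ℕ,
      (∃ p : ℚ[X], B n = X ^ 3 * p.comp (X ^ 3) + if n = 0 then 1 else 0) ∧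
      (∃ p : ℚ[X], B (n + 1) = X ^ 3 * p.comp (X ^ 3)) := by
    intro n
    induction n with
    | zero => exact ⟨⟨0, by simp [h0]⟩, ⟨0, by simp [h1]⟩⟩
    | succ n ih =>
      obtain ⟨⟨p, hp⟩, ⟨q, hq⟩⟩ := ih
      refine ⟨⟨q, by simp [hq]⟩, ?_⟩
      have hcne : (((n : ℚ) + 2) ^ 2 * ((n : ℚ) + 1)) ≠ 0 := by positivity
      apply aux_cancel _ hcne
        (((n : ℚ[X]) + 1) ^ 2 * (2 * (n : ℚ[X]) + 1) * q
          - (n : ℚ[X]) ^ 3 * p + X * p + (if n = 0 then 1 else 0))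
      have hCc : (C (((n : ℚ) + 2) ^ 2 * ((n : ℚ) + 1)) : ℚ[X])
          = ((n : ℚ[X]) + 2) ^ 2 * ((n : ℚ[X]) + 1) := by
        simp [map_mul, map_add, map_pow, map_ofNat, C_eq_natCast]
      rw [hCc, hrec n, hp, hq]
      rcases Nat.eq_zero_or_pos n with rfl | hn
      · simp only [if_pos rfl]
        simp [mul_comp, add_comp, sub_comp, natCast_comp, ofNat_comp, X_comp, pow_comp, one_comp]
        ring
      · rw [if_neg hn.ne']
        simp only [mul_comp, add_comp, sub_comp, natCast_comp, ofNat_comp, X_comp, pow_comp,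
          one_comp, add_zero]
        ring
  intro n hn
  obtain ⟨m, rfl⟩ := Nat.exists_eq_add_of_le hn
  exact (key m).2.imp fun p hp => by simpa [add_comm] using hp
end

section
/- The polynomials B_n^α satisfy the symmetry B_n^{1−n−α}(t) = B_n^α(t) for all n ≥ 0 and α ∈ ℂ. -/
open scoped BigOperators

/-- The polynomials B_n^α(t). -/
noncomputable def Ba (α t : ℂ) (n : ℕ) : ℂ :=
  (1 / (Nat.factorial n : ℂ)) * ∑ k ∈ Finset.range (n + 1),
    poch (ω * t) k * poch (ω ^ 2 * t) k * poch (α + t) (n - k) * poch (α - t + k) (n - k)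
      / ((Nat.factorial k : ℂ) * (Nat.factorial (n - k) : ℂ))

/-! The reflection formula `(1 - a - m)_m = (-1)^m (a)_m` turns the factors `(α' + t)_{n-k}` and
`(α' - t + k)_{n-k}` of the `k`-th summand of `B_n^{α'}`, `α' = 1 - n - α`, into `±(α - t + k)_{n-k}`
and `±(α + t)_{n-k}`: the summand of `B_n^α` with the same sign twice. -/

theorem ascPochhammer_eval_one_sub_sub {R : Type*} [Ring R] (a : R) (m : ℕ) :
    (ascPochhammer R m).eval (1 - a - m) = (-1) ^ m * (ascPochhammer R m).eval a := by
  rw [show 1 - a - m = -(a + m - 1) by abel, ascPochhammer_eval_neg_eq_descPochhammer,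
    descPochhammer_eval_eq_ascPochhammer, show a + m - 1 - m + 1 = a by abel]

theorem poch_one_sub_sub (a : ℂ) (m : ℕ) : poch (1 - a - m) m = (-1) ^ m * poch a m :=
  ascPochhammer_eval_one_sub_sub a m

theorem Ba_symmetry (n : ℕ) (α t : ℂ) :
    Ba (1 - (n : ℂ) - α) t n = Ba α t n := by
  unfold Ba
  congr 1
  refine Finset.sum_congr rfl fun k hk => ?_
  have hnk : ((n - k : ℕ) : ℂ) = n - k :=
    Nat.cast_sub (Nat.lt_succ_iff.mp (Finset.mem_range.mp hk))
  have h₁ : poch (1 - n - α + t) (n - k) = (-1) ^ (n - k) * poch (α - t + k) (n - k) := by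
    rw [← poch_one_sub_sub, hnk]; ring_nf
  have h₂ : poch (1 - n - α - t + k) (n - k) = (-1) ^ (n - k) * poch (α + t) (n - k) := by
    rw [← poch_one_sub_sub, hnk]; ring_nf
  rw [h₁, h₂]
  ring_nf
  simp
end

section
/- For |z| < 1, the generating functions of B_n^α satisfy ∑_{n=0}^∞ B_n^α(t) z^n = (1−z)^{1−2α} ∑_{n=0}^∞ B_n^{1−α}(t) z^n. -/
open scoped BigOperators

/-!
Writing `n! = k! (k+1)_m` for `n = k + m`, `B_n^α(t) = ∑_{k+m=n} x_k F_k(α)_m`, where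
`x_k = (ωt)_k (ω²t)_k / k!²` and `F_k(α)_m` is the `m`-th coefficient of
`₂F₁(α+t, α-t+k; k+1; z)`. For these parameters `c - a - b = 1 - 2α`, and Euler's transformation
turns `F_k(α)` into `(1-z)^{1-2α} F_k(1-α)`; regrouping the triple sum makes the coefficients of
`∑ B_n^α z^n` the Cauchy product of those of `(1-z)^{1-2α}` and `∑ B_n^{1-α} z^n`.
Euler's transformation is proved for formal power series: both sides solve the hypergeometric
equation `θ(θ+c-1)F = X(θ+a)(θ+b)F`, `θ = X d/dX`, which fixes a solution by its constant term.
Convergence for `|z| < 1` comes from the majorant `|B_n| ≤ a_n ∑_{k+m=n} a_k a_m` with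
`a_n = (A)_n / n!`, whose series converges by the binomial theorem.
-/

open Finset
open scoped Nat

lemma ascPochhammer_eval_ne_zero {R : Type*} [Ring R] [IsDomain R] {c : R}
    (hc : ∀ k : ℕ, c + k ≠ 0) (n : ℕ) :
    (ascPochhammer R n).eval c ≠ 0 := by
  rw [Ne, ascPochhammer_eval_eq_zero_iff]
  rintro ⟨k, -, hk⟩
  exact hc k (by rw [hk, add_neg_cancel])

lemma ascPochhammer_eval_add {R : Type*} [CommSemiring R] (a : R) (k m : ℕ) :
    (ascPochhammer R (k + m)).eval a
      = (ascPochhammer R k).eval a * (ascPochhammer R m).eval (a + k) := by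
  rw [← ascPochhammer_mul, Polynomial.eval_mul, Polynomial.eval_comp]
  simp

lemma norm_ascPochhammer_eval_le {R : Type*} [SeminormedRing R] [NormOneClass R] {a : R} {A : ℝ}
    (h : ‖a‖ ≤ A) (n : ℕ) : ‖(ascPochhammer R n).eval a‖ ≤ (ascPochhammer ℝ n).eval A := by
  induction n with
  | zero => simp
  | succ n ih =>
    rw [ascPochhammer_succ_eval, ascPochhammer_succ_eval]
    refine (norm_mul_le _ _).trans (mul_le_mul ih ?_ (norm_nonneg _) ((norm_nonneg _).trans ih))
    exact (norm_add_le _ _).trans (add_le_add h (by simpa using Nat.norm_cast_le (α := R) n))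

namespace PowerSeries

variable {R : Type*} [CommRing R]

noncomputable def eulerOp (R : Type*) [CommRing R] : Derivation R R⟦X⟧ R⟦X⟧ :=
  (X : R⟦X⟧) • derivative R

local notation "θ" => eulerOp _

lemma eulerOp_apply (f : R⟦X⟧) : θ f = X * d⁄dX R f := rfl

@[simp] lemma coeff_eulerOp (f : R⟦X⟧) (n : ℕ) : coeff n (θ f) = n * coeff n f := by
  rcases n with _ | n
  · simp [eulerOp_apply]
  · rw [eulerOp_apply, coeff_succ_X_mul, coeff_derivative]; push_cast; ring

@[simp] lemma constantCoeff_eulerOp (f : R⟦X⟧) : constantCoeff (θ f) = 0 := by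
  simp [eulerOp_apply]

@[simp] lemma eulerOp_C (r : R) : θ (C r) = 0 := by simp [eulerOp_apply]

@[simp] lemma eulerOp_X : θ (X : R⟦X⟧) = X := by simp [eulerOp_apply]

lemma eulerOp_mul (f g : R⟦X⟧) : θ (f * g) = θ f * g + f * θ g := by
  rw [Derivation.leibniz, smul_eq_mul, smul_eq_mul]; ring

def IsHypergeometric (a b c : R) (F : R⟦X⟧) : Prop :=
  θ (θ F) + C (c - 1) * θ F = X * (θ (θ F) + C (a + b) * θ F + C (a * b) * F)

lemma isHypergeometric_iff {a b c : R} {F : R⟦X⟧} : IsHypergeometric a b c F ↔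
    ∀ n : ℕ, (n + 1) * (c + n) * coeff (n + 1) F = (a + n) * (b + n) * coeff n F := by
  simp only [IsHypergeometric, PowerSeries.ext_iff]
  refine ⟨fun h n => ?_, fun h n => ?_⟩
  · have := h (n + 1)
    simp only [map_add, add_mul, coeff_eulerOp, coeff_C_mul, coeff_succ_X_mul] at this
    push_cast at this
    linear_combination this
  · rcases n with _ | n <;>
      simp only [map_add, add_mul, coeff_eulerOp, coeff_C_mul, coeff_succ_X_mul, coeff_zero_X_mul]
    · simp
    · push_cast
      linear_combination h n

/-- `hP` characterises `P = (1 - X) ^ (c - a - b)`, so this is Euler's transformation. -/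
lemma IsHypergeometric.mul [IsDomain R] {a b c : R} {P Q : R⟦X⟧}
    (hP : (1 - X) * θ P = C (a + b - c) * X * P) (hQ : IsHypergeometric (c - a) (c - b) c Q) :
    IsHypergeometric a b c (P * Q) := by
  have hP2 : (1 - X) * θ (θ P) - X * θ P = C (a + b - c) * X * (P + θ P) := by
    have := congrArg θ hP
    simp only [eulerOp_mul, map_sub, Derivation.map_one_eq_zero, eulerOp_X, eulerOp_C] at this ⊢
    linear_combination this
  have h1X : (1 - X : R⟦X⟧) ≠ 0 := by
    intro h; simpa using congrArg (constantCoeff) h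
  unfold IsHypergeometric at hQ ⊢
  refine mul_left_cancel₀ h1X ?_
  simp only [eulerOp_mul, map_add, map_mul, map_sub, map_one] at hP hQ hP2 ⊢
  linear_combination (1 - X) * Q * hP2 + (1 - X) * P * hQ
    + (Q * X * (1 + C a + C b - C c) + 2 * (1 - X) * θ Q + (C c - 1 - X * (C a + C b)) * Q) * hP

section Field

variable {K : Type*} [Field K] [CharZero K]

lemma ordinaryHypergeometricCoefficient_succ {a b c : K} (hc : ∀ k : ℕ, c + k ≠ 0) (n : ℕ) :
    (n + 1) * (c + n) * ordinaryHypergeometricCoefficient a b c (n + 1)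
      = (a + n) * (b + n) * ordinaryHypergeometricCoefficient a b c n := by
  have := ascPochhammer_eval_ne_zero hc n
  have := hc n
  simp only [ordinaryHypergeometricCoefficient, ascPochhammer_succ_eval, Nat.factorial_succ]
  push_cast
  field_simp

lemma isHypergeometric_mk_ordinaryHypergeometricCoefficient {a b c : K}
    (hc : ∀ k : ℕ, c + k ≠ 0) :
    IsHypergeometric a b c (mk (ordinaryHypergeometricCoefficient a b c)) :=
  isHypergeometric_iff.2 fun n => by
    simpa only [coeff_mk] using ordinaryHypergeometricCoefficient_succ hc n

lemma IsHypergeometric.coeff_eq {a b c : K} {F : K⟦X⟧} (hF : IsHypergeometric a b c F)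
    (hc : ∀ k : ℕ, c + k ≠ 0) (n : ℕ) :
    coeff n F = ordinaryHypergeometricCoefficient a b c n * coeff 0 F := by
  induction n with
  | zero => simp [ordinaryHypergeometricCoefficient]
  | succ n ih =>
    have h := isHypergeometric_iff.1 hF n
    have h' := ordinaryHypergeometricCoefficient_succ (a := a) (b := b) hc n
    have hn : ((n : K) + 1) * (c + n) ≠ 0 := mul_ne_zero (Nat.cast_add_one_ne_zero n) (hc n)
    refine mul_left_cancel₀ hn ?_
    rw [h, ih]
    linear_combination coeff 0 F * h'.symm

lemma one_sub_X_mul_eulerOp_mk_ascPochhammer_div_factorial (s : K) :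
    (1 - X) * θ (mk fun n => (ascPochhammer K n).eval s / n !)
      = C s * X * mk fun n => (ascPochhammer K n).eval s / n ! := by
  ext n
  rcases n with _ | n
  · simp
  · simp only [sub_mul, one_mul, map_sub, coeff_eulerOp, coeff_succ_X_mul, mul_assoc, coeff_C_mul,
      coeff_mk, ascPochhammer_succ_eval, Nat.factorial_succ]
    push_cast
    field_simp
    ring

theorem ordinaryHypergeometricCoefficient_eq_sum_antidiagonal {a b c : K}
    (hc : ∀ k : ℕ, c + k ≠ 0) (m : ℕ) :
    ordinaryHypergeometricCoefficient a b c m = ∑ p ∈ antidiagonal m,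
      (ascPochhammer K p.1).eval (a + b - c) / p.1 ! *
        ordinaryHypergeometricCoefficient (c - a) (c - b) c p.2 := by
  have hF := IsHypergeometric.mul (one_sub_X_mul_eulerOp_mk_ascPochhammer_div_factorial (a + b - c))
    (isHypergeometric_mk_ordinaryHypergeometricCoefficient (a := c - a) (b := c - b) hc)
  simpa [coeff_mul, ordinaryHypergeometricCoefficient] using (hF.coeff_eq hc m).symm

end Field

end PowerSeries

lemma Ring.choose_add_natCast_sub_one {K : Type*} [Field K] [CharZero K] (a : K) (n : ℕ) :
    Ring.choose (a + n - 1) n = (ascPochhammer K n).eval a / n ! := by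
  rw [← Ring.multichoose_eq, eq_div_iff (by exact_mod_cast n.factorial_ne_zero), mul_comm,
    ← nsmul_eq_mul, Ring.factorial_nsmul_multichoose_eq_ascPochhammer,
    Polynomial.ascPochhammer_smeval_eq_eval]

theorem Complex.hasSum_ascPochhammer_div_factorial_mul_pow (s : ℂ) {z : ℂ} (hz : ‖z‖ < 1) :
    HasSum (fun n => (ascPochhammer ℂ n).eval s / n ! * z ^ n) ((1 - z) ^ (-s)) := by
  have := (one_div_one_sub_cpow_hasFPowerSeriesOnBall_zero s).hasSum (y := z)
    (by rw [Metric.mem_eball, edist_zero_right, enorm_eq_nnnorm]; exact_mod_cast hz)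
  simpa [FormalMultilinearSeries.ofScalars_apply_eq, Ring.choose_add_natCast_sub_one,
    Complex.cpow_neg, mul_comm] using this

theorem Real.summable_ascPochhammer_div_factorial_mul_pow (A : ℝ) {r : ℝ} (hr : ‖r‖ < 1) :
    Summable fun n => (ascPochhammer ℝ n).eval A / n ! * r ^ n := by
  have := (one_div_one_sub_rpow_hasFPowerSeriesOnBall_zero A).hasSum (y := r)
    (by rw [Metric.mem_eball, edist_zero_right, enorm_eq_nnnorm]; exact_mod_cast hr)
  simpa [FormalMultilinearSeries.ofScalars_apply_eq, Ring.choose_add_natCast_sub_one,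
    mul_comm] using this.summable

theorem Complex.summable_norm_ascPochhammer_div_factorial_mul_pow (s : ℂ) {z : ℂ}
    (hz : ‖z‖ < 1) :
    Summable fun n => ‖(ascPochhammer ℂ n).eval s / n ! * z ^ n‖ := by
  refine Summable.of_nonneg_of_le (fun _ => norm_nonneg _) (fun n => ?_)
    (Real.summable_ascPochhammer_div_factorial_mul_pow ‖s‖ (r := ‖z‖) (by simpa using hz))
  rw [norm_mul, norm_div, norm_pow, Complex.norm_natCast]
  gcongr
  exact norm_ascPochhammer_eval_le le_rfl n

theorem Finset.Nat.sum_antidiagonal_sum_antidiagonal_comm {M : Type*} [AddCommMonoid M]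
    (f : ℕ → ℕ → ℕ → M) (n : ℕ) :
    ∑ p ∈ antidiagonal n, ∑ q ∈ antidiagonal p.2, f p.1 q.1 q.2
      = ∑ p ∈ antidiagonal n, ∑ q ∈ antidiagonal p.2, f q.1 p.1 q.2 := by
  rw [Finset.sum_sigma', Finset.sum_sigma']
  let e : (_ : ℕ × ℕ) × ℕ × ℕ → (_ : ℕ × ℕ) × ℕ × ℕ :=
    fun x => ⟨(x.2.1, x.1.1 + x.2.2), (x.1.1, x.2.2)⟩
  have he : ∀ x ∈ (antidiagonal n).sigma fun p => antidiagonal p.2, e (e x) = x := by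
    rintro ⟨⟨k, m⟩, ⟨i, j⟩⟩ h
    simp only [Finset.mem_sigma, HasAntidiagonal.mem_antidiagonal] at h
    simp only [e, Sigma.mk.injEq, Prod.mk.injEq, heq_eq_eq, true_and, and_true]
    omega
  refine Finset.sum_nbij' e e ?_ ?_ he he fun x _ => rfl <;>
  · rintro ⟨⟨k, m⟩, ⟨i, j⟩⟩ h
    simp only [Finset.mem_sigma, HasAntidiagonal.mem_antidiagonal, e, and_true] at h ⊢
    omega

lemma Ba_eq_sum_antidiagonal (β t : ℂ) (n : ℕ) :
    Ba β t n = ∑ p ∈ antidiagonal n,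
      poch (ω * t) p.1 * poch (ω ^ 2 * t) p.1 / (p.1 ! * p.1 !) *
        ordinaryHypergeometricCoefficient (β + t) (β - t + p.1) (p.1 + 1) p.2 := by
  rw [Ba, Finset.Nat.sum_antidiagonal_eq_sum_range_succ_mk, Finset.mul_sum]
  refine Finset.sum_congr rfl fun k hk => ?_
  obtain ⟨m, rfl⟩ := Nat.exists_eq_add_of_le (Nat.lt_succ_iff.1 (Finset.mem_range.1 hk))
  have hfac : (k ! : ℂ) * poch (k + 1) m = (k + m)! := factorial_mul_ascPochhammer ℂ k m
  have hpoch : poch (k + 1) m ≠ 0 :=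
    right_ne_zero_of_mul (by rw [hfac]; exact_mod_cast (k + m).factorial_ne_zero)
  simp only [Nat.add_sub_cancel_left, ordinaryHypergeometricCoefficient]
  rw [← hfac]
  simp only [poch] at hpoch ⊢
  field_simp

lemma Ba_eq_sum_antidiagonal_mul (α t : ℂ) (n : ℕ) :
    Ba α t n = ∑ p ∈ antidiagonal n, poch (2 * α - 1) p.1 / p.1 ! * Ba (1 - α) t p.2 := by
  have euler (k m : ℕ) : ordinaryHypergeometricCoefficient (α + t) (α - t + k) (k + 1) m
      = ∑ q ∈ antidiagonal m, poch (2 * α - 1) q.1 / q.1 ! *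
          ordinaryHypergeometricCoefficient (1 - α + t) (1 - α - t + k) (k + 1) q.2 := by
    rw [PowerSeries.ordinaryHypergeometricCoefficient_eq_sum_antidiagonal
      fun j => by exact_mod_cast (by omega : k + 1 + j ≠ 0),
      show α + t + (α - t + k) - (k + 1) = 2 * α - 1 by ring,
      show (k : ℂ) + 1 - (α + t) = 1 - α - t + k by ring,
      show (k : ℂ) + 1 - (α - t + k) = 1 - α + t by ring]
    simp only [ordinaryHypergeometricCoefficient, poch]
    refine Finset.sum_congr rfl fun q _ => ?_
    ring
  rw [Ba_eq_sum_antidiagonal]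
  simp only [euler, Finset.mul_sum]
  rw [Finset.Nat.sum_antidiagonal_sum_antidiagonal_comm
    (fun k i j => poch (ω * t) k * poch (ω ^ 2 * t) k / (k ! * k !) *
      (poch (2 * α - 1) i / i ! *
        ordinaryHypergeometricCoefficient (1 - α + t) (1 - α - t + k) (k + 1) j))]
  simp only [Ba_eq_sum_antidiagonal, Finset.mul_sum]
  refine Finset.sum_congr rfl fun p _ => Finset.sum_congr rfl fun q _ => ?_
  ring

lemma norm_Ba_le (β t : ℂ) {A : ℝ} (h₁ : ‖ω * t‖ ≤ A) (h₂ : ‖ω ^ 2 * t‖ ≤ A)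
    (h₃ : ‖β + t‖ ≤ A) (h₄ : ‖β - t‖ ≤ A) (n : ℕ) :
    ‖Ba β t n‖ ≤ (ascPochhammer ℝ n).eval A / n ! * ∑ p ∈ antidiagonal n,
      (ascPochhammer ℝ p.1).eval A / p.1 ! * ((ascPochhammer ℝ p.2).eval A / p.2 !) := by
  rw [Ba, ← Finset.Nat.sum_antidiagonal_eq_sum_range_succ
    (fun k m => poch (ω * t) k * poch (ω ^ 2 * t) k * poch (β + t) m * poch (β - t + k) m
      / ((k ! : ℂ) * (m ! : ℂ))), Finset.mul_sum, Finset.mul_sum]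
  refine (norm_sum_le _ _).trans (Finset.sum_le_sum fun p hp => ?_)
  obtain ⟨k, m⟩ := p
  obtain rfl : k + m = n := HasAntidiagonal.mem_antidiagonal.1 hp
  have hx : ‖poch (ω * t) k‖ ≤ _ := norm_ascPochhammer_eval_le h₁ k
  have hy : ‖poch (ω ^ 2 * t) k‖ ≤ _ := norm_ascPochhammer_eval_le h₂ k
  have hu : ‖poch (β + t) m‖ ≤ _ := norm_ascPochhammer_eval_le h₃ m
  have hv : ‖poch (β - t + k) m‖ ≤ (ascPochhammer ℝ m).eval (A + k) :=
    norm_ascPochhammer_eval_le ((norm_add_le _ _).trans (by simpa using h₄)) m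
  have := (norm_nonneg _).trans hx
  have := (norm_nonneg _).trans hu
  simp only [norm_mul, norm_div, norm_one, Complex.norm_natCast, ascPochhammer_eval_add]
  calc _ = ‖poch (ω * t) k‖ * ‖poch (ω ^ 2 * t) k‖ * ‖poch (β + t) m‖ * ‖poch (β - t + k) m‖
        * (1 / ((k + m)! * (k ! * m !))) := by ring
    _ ≤ (ascPochhammer ℝ k).eval A * (ascPochhammer ℝ k).eval A * (ascPochhammer ℝ m).eval A
        * (ascPochhammer ℝ m).eval (A + k) * (1 / ((k + m)! * (k ! * m !))) := by gcongr
    _ = _ := by ring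

lemma summable_norm_Ba_mul_pow (β t : ℂ) {z : ℂ} (hz : ‖z‖ < 1) :
    Summable fun n => ‖Ba β t n * z ^ n‖ := by
  set A := ‖ω * t‖ + ‖ω ^ 2 * t‖ + ‖β + t‖ + ‖β - t‖
  obtain ⟨h₁, h₂, h₃, h₄⟩ :
      ‖ω * t‖ ≤ A ∧ ‖ω ^ 2 * t‖ ≤ A ∧ ‖β + t‖ ≤ A ∧ ‖β - t‖ ≤ A := by
    have := norm_nonneg (ω * t); have := norm_nonneg (ω ^ 2 * t)
    have := norm_nonneg (β + t); have := norm_nonneg (β - t)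
    refine ⟨?_, ?_, ?_, ?_⟩ <;> linarith
  -- `‖z‖ ^ n = ρ ^ n * ρ ^ n` lets the two factors of the majorant converge separately.
  set ρ := √‖z‖
  have hρ : ‖ρ‖ < 1 := by
    rw [Real.norm_of_nonneg (Real.sqrt_nonneg _), Real.sqrt_lt' one_pos]; simpa using hz
  set a : ℕ → ℝ := fun n => (ascPochhammer ℝ n).eval A / (n ! : ℝ) * ρ ^ n
  have ha : Summable a := Real.summable_ascPochhammer_div_factorial_mul_pow A hρ
  have hS := (summable_norm_sum_mul_antidiagonal_of_summable_norm ha.norm ha.norm).mul_tendsto_const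
    ha.tendsto_cofinite_zero
  refine Summable.of_nonneg_of_le (fun _ => norm_nonneg _) (fun n => ?_) hS
  have hz' : ‖z‖ ^ n = ρ ^ n * ρ ^ n := by
    rw [← mul_pow, Real.mul_self_sqrt (norm_nonneg z)]
  have hsum : ∑ p ∈ antidiagonal n, a p.1 * a p.2 = (∑ p ∈ antidiagonal n,
      (ascPochhammer ℝ p.1).eval A / p.1 ! * ((ascPochhammer ℝ p.2).eval A / p.2 !))
        * ρ ^ n := by
    rw [Finset.sum_mul]
    refine Finset.sum_congr rfl fun p hp => ?_
    rw [← HasAntidiagonal.mem_antidiagonal.1 hp, pow_add]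
    ring
  rw [norm_mul, norm_pow, hsum, hz']
  calc ‖Ba β t n‖ * (ρ ^ n * ρ ^ n)
      ≤ (ascPochhammer ℝ n).eval A / n ! * (∑ p ∈ antidiagonal n,
          (ascPochhammer ℝ p.1).eval A / p.1 ! * ((ascPochhammer ℝ p.2).eval A / p.2 !))
          * (ρ ^ n * ρ ^ n) := by
        gcongr
        exact norm_Ba_le β t h₁ h₂ h₃ h₄ n
    _ = _ := by ring

theorem Ba_genFun_Euler (α t z : ℂ) (hz : ‖z‖ < 1) :
    ∑' n : ℕ, Ba α t n * z ^ n
      = (1 - z) ^ (1 - 2 * α) * ∑' n : ℕ, Ba (1 - α) t n * z ^ n := by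
  rw [show 1 - 2 * α = -(2 * α - 1) by ring,
    ← (Complex.hasSum_ascPochhammer_div_factorial_mul_pow (2 * α - 1) hz).tsum_eq,
    tsum_mul_tsum_eq_tsum_sum_antidiagonal_of_summable_norm
      (Complex.summable_norm_ascPochhammer_div_factorial_mul_pow _ hz)
      (summable_norm_Ba_mul_pow (1 - α) t hz)]
  refine tsum_congr fun n => ?_
  rw [Ba_eq_sum_antidiagonal_mul, Finset.sum_mul]
  refine Finset.sum_congr rfl fun p hp => ?_
  rw [← HasAntidiagonal.mem_antidiagonal.1 hp, pow_add]
  simp only [poch]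
  ring
end

section
/- Let A_n = A_n(t) satisfy the 3-term recurrence (n³ − (−1)^n t³) A_n + (n+1)²(2n+1) A_{n+1} + (n+2)²(n+1) A_{n+2} = 0. Then the subsequence satisfies the self-contained recursion (2n+1)((n−1)³ + (−1)^n t³)((n−2)³ − (−1)^n t³) A_{n−2} − n(n−1)(2n−1)(2n(n−1)(n²−n−1) − 3(−1)^n t³) A_n + (n+2)²(n+1)n(n−1)²(2n−3) A_{n+2} = 0 for n ≥ 2. -/
theorem A_even_odd_elimination (t : ℂ) (A : ℕ → ℂ)
    (hrec : ∀ n : ℕ,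
      ((n : ℂ) ^ 3 - (-1) ^ n * t ^ 3) * A n
        + ((n : ℂ) + 1) ^ 2 * (2 * (n : ℂ) + 1) * A (n + 1)
        + ((n : ℂ) + 2) ^ 2 * ((n : ℂ) + 1) * A (n + 2) = 0) :
    ∀ n : ℕ, 2 ≤ n →
      (2 * (n : ℂ) + 1) * (((n : ℂ) - 1) ^ 3 + (-1) ^ n * t ^ 3)
          * (((n : ℂ) - 2) ^ 3 - (-1) ^ n * t ^ 3) * A (n - 2)
        - (n : ℂ) * ((n : ℂ) - 1) * (2 * (n : ℂ) - 1)
            * (2 * (n : ℂ) * ((n : ℂ) - 1) * ((n : ℂ) ^ 2 - (n : ℂ) - 1)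
                - 3 * (-1) ^ n * t ^ 3) * A n
        + ((n : ℂ) + 2) ^ 2 * ((n : ℂ) + 1) * (n : ℂ) * ((n : ℂ) - 1) ^ 2
            * (2 * (n : ℂ) - 3) * A (n + 2) = 0 := by
  intro n hn
  obtain ⟨m, rfl⟩ : ∃ m, n = m + 2 := ⟨n - 2, by omega⟩
  have h0 := hrec m
  have h1 := hrec (m + 1)
  have h2 := hrec (m + 2)
  push_cast at h0 h1 h2 ⊢
  simp only [show m + 2 - 2 = m from rfl, show m + 2 + 2 = m + 4 from rfl,
    show m + 1 + 1 = m + 2 from rfl, show m + 2 + 1 = m + 3 from rfl,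
    show m + 1 + 2 = m + 3 from rfl] at *
  set c : ℂ := (m : ℂ)
  linear_combination (((c+1)^3 + (-1)^m * t^3) * (2*c+5)) * h0
    + (-(c+1)^2 * (2*c+1) * (2*c+5)) * h1
    + ((c+1)^2 * (2*c+1) * (c+2)) * h2
end
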